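/- Let T be the n×n lower-triangular indicator matrix (T_{ij} = 1 if i ≥ j, 0 otherwise), let A ∈ ℝ^{n×n} have rows of norm at most ‖A‖, and let W = (2AA^T)∘T - diag(‖A_1‖²,…,‖A_n‖²) be the strictly-adjusted lower-triangular part satisfying W + W^T = 2AA^T. Assuming the triangular truncation bound ‖M∘T‖ ≤ K_n ‖M‖ with K_n ≤ (log n)/π + 1 + 1/π for n ≥ 2, one has ‖W‖ ≤ (2 K_n)‖A‖² + ‖A‖ = O((log n)‖A‖²). -/

import Mathlib

/-!
Since `T` has unit diagonal, `W = S ⊙ T` with `S = 2AAᵀ - diag(‖A₁‖², …, ‖Aₙ‖²)`. The matrix `S`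
is symmetric, and its quadratic form `2‖Aᵀx‖² - ∑ ‖Aᵢ‖² xᵢ²` lies between `-‖A‖²‖x‖²` and
`2‖A‖²‖x‖²` because `‖Aᵢ‖ ≤ ‖A‖`; hence `‖S‖ ≤ 2‖A‖²`, and the truncation bound gives
`‖W‖ ≤ 2Kₙ‖A‖²`.
-/

open Matrix WithLp
open scoped Matrix.Norms.L2Operator

theorem EuclideanSpace.real_norm_sq_eq_dotProduct {n : Type*} [Fintype n]
    (x : EuclideanSpace ℝ n) : ‖x‖ ^ 2 = ofLp x ⬝ᵥ ofLp x := by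
  rw [EuclideanSpace.real_norm_sq_eq, dotProduct]
  simp [sq]

namespace Matrix

theorem sub_diagonal_hadamard_of_diag_eq_one {n α : Type*} [Ring α] [DecidableEq n]
    (M T : Matrix n n α) (d : n → α) (hT : ∀ i, T i i = 1) :
    (M - diagonal d) ⊙ T = M ⊙ T - diagonal d := by
  ext i j
  rcases eq_or_ne i j with rfl | hij
  · simp [hT]
  · simp [diagonal_apply_ne _ hij]

variable {m n : Type*} [Fintype m] [Fintype n]

theorem dotProduct_self_nonneg (x : n → ℝ) : 0 ≤ x ⬝ᵥ x :=
  Finset.sum_nonneg fun i _ => mul_self_nonneg (x i)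

theorem IsHermitian.l2_opNorm_le_of_abs_dotProduct_mulVec_le [DecidableEq n]
    {S : Matrix n n ℝ} (hS : S.IsHermitian) {c : ℝ} (hc : 0 ≤ c)
    (hq : ∀ x : n → ℝ, |x ⬝ᵥ S *ᵥ x| ≤ c * (x ⬝ᵥ x)) : ‖S‖ ≤ c := by
  have hsymm : (toEuclideanCLM (𝕜 := ℝ) S).IsSymmetric := isSymmetric_toEuclideanLin_iff.mpr hS
  rw [← l2_opNorm_toEuclideanCLM, ContinuousLinearMap.norm_eq_iSup_rayleighQuotient _ hsymm]
  refine ciSup_le fun x => ?_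
  rw [ContinuousLinearMap.rayleighQuotient, ContinuousLinearMap.reApplyInnerSelf_apply,
    RCLike.re_to_real, real_inner_comm, inner_toEuclideanCLM,
    EuclideanSpace.real_norm_sq_eq_dotProduct, abs_div, abs_of_nonneg (dotProduct_self_nonneg _)]
  exact div_le_of_le_mul₀ (dotProduct_self_nonneg _) hc (hq _)

theorem dotProduct_mulVec_self_le [DecidableEq n] (B : Matrix m n ℝ) (x : n → ℝ) :
    (B *ᵥ x) ⬝ᵥ (B *ᵥ x) ≤ ‖B‖ ^ 2 * (x ⬝ᵥ x) := by
  have h := pow_le_pow_left₀ (norm_nonneg _) (B.l2_opNorm_mulVec (toLp 2 x)) 2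
  rwa [mul_pow, EuclideanSpace.real_norm_sq_eq_dotProduct,
    EuclideanSpace.real_norm_sq_eq_dotProduct] at h

theorem dotProduct_mul_transpose_mulVec (A : Matrix m n ℝ) (x : m → ℝ) :
    x ⬝ᵥ (A * Aᵀ) *ᵥ x = (Aᵀ *ᵥ x) ⬝ᵥ (Aᵀ *ᵥ x) := by
  rw [← mulVec_mulVec, dotProduct_mulVec, mulVec_transpose]

theorem l2_opNorm_transpose [DecidableEq m] [DecidableEq n] (A : Matrix m n ℝ) :
    ‖Aᵀ‖ = ‖A‖ := by
  rw [← conjTranspose_eq_transpose_of_trivial, l2_opNorm_conjTranspose]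

theorem sum_sq_row_le_l2_opNorm_sq [DecidableEq m] [DecidableEq n] (A : Matrix m n ℝ) (i : m) :
    ∑ j, A i j ^ 2 ≤ ‖A‖ ^ 2 := by
  have h := dotProduct_mulVec_self_le Aᵀ (Pi.single i 1)
  simpa [mulVec_single_one, l2_opNorm_transpose, dotProduct, Pi.single_apply, sq] using h

theorem l2_opNorm_two_smul_mul_transpose_sub_diagonal_le [DecidableEq m] [DecidableEq n]
    (A : Matrix m n ℝ) :
    ‖(2 : ℝ) • (A * Aᵀ) - diagonal (fun i => ∑ j, A i j ^ 2)‖ ≤ 2 * ‖A‖ ^ 2 := by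
  set d : m → ℝ := fun i => ∑ j, A i j ^ 2
  have hS : ((2 : ℝ) • (A * Aᵀ) - diagonal d).IsHermitian := by
    refine IsHermitian.sub (IsHermitian.smul ?_ (IsSelfAdjoint.all _)) (isHermitian_diagonal d)
    simpa [conjTranspose_eq_transpose_of_trivial] using isHermitian_mul_conjTranspose_self A
  refine hS.l2_opNorm_le_of_abs_dotProduct_mulVec_le (by positivity) fun x => ?_
  have hAAt := dotProduct_mulVec_self_le Aᵀ x
  rw [l2_opNorm_transpose] at hAAt
  have hAAt_nonneg := dotProduct_self_nonneg (Aᵀ *ᵥ x)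
  have hd : 0 ≤ x ⬝ᵥ diagonal d *ᵥ x ∧ x ⬝ᵥ diagonal d *ᵥ x ≤ ‖A‖ ^ 2 * (x ⬝ᵥ x) := by
    simp only [dotProduct, mulVec_diagonal, Finset.mul_sum]
    refine ⟨Finset.sum_nonneg fun i _ => ?_, Finset.sum_le_sum fun i _ => ?_⟩
    · nlinarith [mul_self_nonneg (x i), show 0 ≤ d i by positivity]
    · nlinarith [mul_self_nonneg (x i), sum_sq_row_le_l2_opNorm_sq A i]
  have hform : x ⬝ᵥ ((2 : ℝ) • (A * Aᵀ) - diagonal d) *ᵥ x =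
      2 * ((Aᵀ *ᵥ x) ⬝ᵥ (Aᵀ *ᵥ x)) - x ⬝ᵥ diagonal d *ᵥ x := by
    rw [sub_mulVec, dotProduct_sub, smul_mulVec, dotProduct_smul, dotProduct_mul_transpose_mulVec,
      smul_eq_mul]
  rw [hform, abs_le]
  constructor <;> nlinarith [dotProduct_self_nonneg x]

end Matrix

theorem norm_W_bound (n : ℕ)
    (A : Matrix (Fin n) (Fin n) ℝ)
    (T : Matrix (Fin n) (Fin n) ℝ)
    (hT : ∀ i j : Fin n, T i j = if j ≤ i then 1 else 0)
    (Kn : ℝ)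
    (hK : ∀ M : Matrix (Fin n) (Fin n) ℝ, ‖Matrix.hadamard M T‖ ≤ Kn * ‖M‖) :
    ‖Matrix.hadamard ((2 : ℝ) • (A * Aᵀ)) T -
        Matrix.diagonal (fun i => ∑ j, A i j ^ 2)‖ ≤
      2 * Kn * ‖A‖ ^ 2 + ‖A‖ := by
  set S := (2 : ℝ) • (A * Aᵀ) - diagonal (fun i => ∑ j, A i j ^ 2)
  have hS : ‖S‖ ≤ 2 * ‖A‖ ^ 2 := l2_opNorm_two_smul_mul_transpose_sub_diagonal_le A
  rw [← sub_diagonal_hadamard_of_diag_eq_one _ _ _ fun i => by simp [hT]]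
  refine (hK S).trans ?_
  rcases le_or_gt 0 Kn with hKn | hKn
  · nlinarith [mul_le_mul_of_nonneg_left hS hKn, norm_nonneg A]
  · -- then `0 ≤ ‖A ⊙ T‖ ≤ Kn * ‖A‖` forces `‖A‖ = 0`
    have hA : ‖A‖ = 0 := by nlinarith [(norm_nonneg _).trans (hK A), norm_nonneg A]
    have hS0 : ‖S‖ = 0 := by nlinarith [norm_nonneg S]
    simp [hA, hS0]
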